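/- arXiv:1902.09620 — 2 statements merged into one kernel-verified Lean document; each statement's English description precedes it below -/
import Mathlib

section
/- Let F be a field with char(F) ≠ 2 and G a non-abelian group with involution * extended to FG. If FG is normal, then G is an LC-group: for all g, h ∈ G, gh = hg if and only if at least one of g, h, gh lies in the center of G. -/
/-!
Normality applied to `g` gives `g * st g = st g * g`; applied to `g + st h` and compared
coefficientwise (using `2 ≠ 0`), it gives `st g * st h = g * h` whenever `g` and `h` do not
commute. Together with the anti-multiplicativity of `st` this forces `st g = x⁻¹ * g * x` for
every `x` not commuting with `g`, so `st` moves every non-central element. Now suppose `g` and `h`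
commute while none of `g`, `h`, `g * h` is central, and pick `x` not commuting with `g * h`; say
`h` does not commute with `x`. Comparing the two expressions for `st x` obtained from `h` and from
`g * h` shows that `g` commutes with `x`, and then
`st g * st h = st (g * h) = x⁻¹ * g * h * x = g * st h`, so `st g = g`.
-/

/-- The F-linear extension of a group involution `st` to the group algebra. -/
noncomputable def invMap {F G : Type*} [Field F] [Group G] (st : G → G) :
    MonoidAlgebra F G → MonoidAlgebra F G :=
  fun α => MonoidAlgebra.ofCoeff (Finsupp.mapDomain st α.coeff)

open MonoidAlgebra

section GroupAlgebra

variable {F G : Type*} [Field F] [Group G] {st : G → G}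

lemma invMap_eq_mapDomain (st : G → G) : invMap (F := F) st = mapDomain st := rfl

lemma commute_self_of_normal
    (hnormal : ∀ α : MonoidAlgebra F G, α * invMap st α = invMap st α * α) (g : G) :
    Commute g (st g) := (commute_iff_eq _ _).2 <| by
  simpa [invMap_eq_mapDomain, single_mul_single, single_left_inj one_ne_zero]
    using hnormal (single g 1)

lemma mul_eq_of_normal_of_not_commute (h2 : (2 : F) ≠ 0) (hinvol : ∀ g : G, st (st g) = g)
    (hnormal : ∀ α : MonoidAlgebra F G, α * invMap st α = invMap st α * α)
    {g h : G} (hgh : ¬Commute g h) : st g * st h = g * h := by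
  have hE := hnormal (single g 1 + single (st h) 1)
  simp only [invMap_eq_mapDomain, mapDomain_add, mapDomain_single, hinvol, add_mul, mul_add,
    single_mul_single, one_mul] at hE
  rw [(commute_self_of_normal hnormal g).eq, (commute_self_of_normal hnormal h).eq] at hE
  have key : single (g * h) (1 : F) + single (st h * st g) 1
      = single (st g * st h) 1 + single (h * g) 1 := by
    rw [← sub_eq_zero] at hE ⊢
    convert hE using 1
    abel
  rcases (single_add_single_inj one_ne_zero one_ne_zero).1 key with
    ⟨h1, -⟩ | ⟨-, h1, -⟩ | ⟨h1, -⟩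
  · exact h1.symm
  · exact absurd h1 hgh
  · exact absurd (one_add_one_eq_two.symm.trans h1) h2

end GroupAlgebra

section AntiHom

variable {G : Type*} [Group G] {st : G → G}

lemma st_eq_conj_of_not_commute (hanti : ∀ g h : G, st (g * h) = st h * st g)
    (hpair : ∀ g h : G, ¬Commute g h → st g * st h = g * h) {g x : G} (hgx : ¬Commute g x) :
    st g = x⁻¹ * g * x := by
  have hggx := hpair g (g * x) fun c => hgx ((IsLeftRegular.all g).commute_mul_left_iff.1 c.symm)
  rw [hanti, ← mul_assoc, hpair g x hgx, mul_assoc] at hggx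
  rw [mul_assoc, eq_inv_mul_iff_mul_eq]
  exact mul_left_cancel hggx

lemma st_ne_self_of_not_mem_center (hanti : ∀ g h : G, st (g * h) = st h * st g)
    (hpair : ∀ g h : G, ¬Commute g h → st g * st h = g * h) {g : G}
    (hg : g ∉ Subgroup.center G) : st g ≠ g := by
  obtain ⟨x, hx⟩ : ∃ x, ¬Commute g x := by
    simpa [Subgroup.mem_center_iff, commute_iff_eq, eq_comm] using hg
  intro h
  rw [st_eq_conj_of_not_commute hanti hpair hx, mul_assoc, inv_mul_eq_iff_eq_mul] at h
  exact hx h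

lemma st_eq_self_of_not_commute (hanti : ∀ g h : G, st (g * h) = st h * st g)
    (hpair : ∀ g h : G, ¬Commute g h → st g * st h = g * h) {g h x : G}
    (hgh : Commute g h) (hhx : ¬Commute h x) (hghx : ¬Commute (g * h) x) : st g = g := by
  have hgx : Commute g x := by
    have e : (g * h)⁻¹ * x * (g * h) = h⁻¹ * x * h :=
      (st_eq_conj_of_not_commute hanti hpair fun c => hghx c.symm).symm.trans
        (st_eq_conj_of_not_commute hanti hpair fun c => hhx c.symm)
    rw [commute_iff_eq]
    calc g * x = g * (h * (h⁻¹ * x * h) * h⁻¹) := by group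
      _ = g * (h * ((g * h)⁻¹ * x * (g * h)) * h⁻¹) := by rw [e]
      _ = x * g := by group
  have : st g * st h = g * st h :=
    calc st g * st h = st (g * h) := by rw [hgh.eq, hanti]
      _ = x⁻¹ * (g * h) * x := st_eq_conj_of_not_commute hanti hpair hghx
      _ = g * (x⁻¹ * h * x) := by rw [← mul_assoc x⁻¹, ← hgx.inv_right.eq]; group
      _ = g * st h := by rw [st_eq_conj_of_not_commute hanti hpair hhx]
  exact mul_right_cancel this

end AntiHom

theorem stmt_5_general {F G : Type*} [Field F] [Group G] (h2 : (2 : F) ≠ 0)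
    (st : G → G) (hanti : ∀ g h : G, st (g * h) = st h * st g)
    (hinvol : ∀ g : G, st (st g) = g)
    (hnormal : ∀ α : MonoidAlgebra F G, α * invMap st α = invMap st α * α) :
    ∀ g h : G, g * h = h * g ↔
      (g ∈ Subgroup.center G ∨ h ∈ Subgroup.center G ∨ g * h ∈ Subgroup.center G) := by
  have hpair : ∀ g h : G, ¬Commute g h → st g * st h = g * h :=
    fun _ _ => mul_eq_of_normal_of_not_commute h2 hinvol hnormal
  intro g h
  refine ⟨fun hgh => ?_, ?_⟩
  · by_contra! hcen
    obtain ⟨hg, hh, hmul⟩ := hcen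
    obtain ⟨x, hx⟩ : ∃ x, ¬Commute (g * h) x := by
      simpa [Subgroup.mem_center_iff, commute_iff_eq, eq_comm] using hmul
    by_cases hhx : Commute h x
    · have hgx : ¬Commute g x := fun hgx => hx (hgx.mul_left hhx)
      exact st_ne_self_of_not_mem_center hanti hpair hh
        (st_eq_self_of_not_commute hanti hpair (Commute.symm hgh) hgx (hgh ▸ hx))
    · exact st_ne_self_of_not_mem_center hanti hpair hg
        (st_eq_self_of_not_commute hanti hpair hgh hhx hx)
  · rintro (hg | hh | hgh)
    · exact (Subgroup.mem_center_iff.1 hg h).symm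
    · exact Subgroup.mem_center_iff.1 hh g
    · exact (IsLeftRegular.all g).commute_mul_left_iff.1 (Subgroup.mem_center_iff.1 hgh g).symm

theorem stmt_5 {F G : Type*} [Field F] [Group G] (h2 : (2 : F) ≠ 0)
    (hna : ∃ g h : G, g * h ≠ h * g)
    (st : G → G) (hanti : ∀ g h : G, st (g * h) = st h * st g)
    (hinvol : ∀ g : G, st (st g) = g)
    (hnormal : ∀ α : MonoidAlgebra F G, α * invMap st α = invMap st α * α) :
    ∀ g h : G, g * h = h * g ↔
      (g ∈ Subgroup.center G ∨ h ∈ Subgroup.center G ∨ g * h ∈ Subgroup.center G) :=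
  stmt_5_general h2 st hanti hinvol hnormal
end

section
/- Let F be a field with char(F) ≠ 2, G a non-abelian group with non-trivial orientation σ and involution *, and suppose FG is normal with respect to the oriented involution ⊛. If N = ker(σ) is an SLC-group with unique non-identity commutator s, then G has a unique non-identity commutator equal to s, and s is central in G. -/
/-- The oriented involution on the group algebra: `(Σ α_g g)⊛ = Σ α_g σ(g) g*`. -/
noncomputable def oinvMap {F G : Type*} [Field F] [Group G] (st : G → G) (σ : G → F) :
    MonoidAlgebra F G → MonoidAlgebra F G :=
  fun α => Finsupp.sum α.coeff fun g c => MonoidAlgebra.single (st g) (σ g * c)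

/-! Normality of `g + n g`, for `n` in the kernel of `σ`, equates two pairs of group elements of
`FG`; as `char F ≠ 2` this forces `g n* = n g` or `g n* = n* g`. The canonical involution has
`n* ∈ {n, s n}`, which makes `s` central in `G` and every commutator `[g, n]` with `n ∈ N` lie in
`{1, s}`. Since `N` has index two, every commutator of `G` is of this form or the inverse of one. -/

open MonoidAlgebra

section OrientedInvolution

variable {F G : Type*} [Field F] [Group G] {st : G → G} {σ : G → F}

@[simp]
lemma oinvMap_single (g : G) (c : F) :
    oinvMap st σ (single g c) = single (st g) (σ g * c) := by
  unfold oinvMap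
  rw [coeff_single]
  exact Finsupp.sum_single_index (by simp)

@[simp]
lemma oinvMap_add (α β : MonoidAlgebra F G) :
    oinvMap st σ (α + β) = oinvMap st σ α + oinvMap st σ β := by
  unfold oinvMap
  rw [coeff_add]
  exact Finsupp.sum_add_index' (fun _ => by simp) (fun _ _ _ => by rw [mul_add, single_add])

lemma eq_or_eq_of_single_add_single_eq (h2 : (2 : F) ≠ 0) {c : F} (hc : c ≠ 0) {x y z w : G}
    (h : (single x c + single y c : MonoidAlgebra F G) = single z c + single w c) :
    x = z ∨ x = w := by
  rcases (single_add_single_inj hc hc).1 h with ⟨h, -⟩ | ⟨-, h, -⟩ | ⟨h, -⟩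
  · exact .inl h
  · exact .inr h
  · exact absurd (by rw [two_mul]; exact h) (mul_ne_zero h2 hc)

lemma mul_st_comm_of_normal
    (hnormal : ∀ α : MonoidAlgebra F G, α * oinvMap st σ α = oinvMap st σ α * α)
    {g : G} (hg : σ g ≠ 0) : g * st g = st g * g := by
  simpa [single_left_inj hg] using hnormal (single g 1)

lemma mul_st_eq_or_of_normal (h2 : (2 : F) ≠ 0) (hanti : ∀ g h : G, st (g * h) = st h * st g)
    (hhom : ∀ g h : G, σ (g * h) = σ g * σ h)
    (hnormal : ∀ α : MonoidAlgebra F G, α * oinvMap st σ α = oinvMap st σ α * α)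
    {g n : G} (hg : σ g ≠ 0) (hn : σ n = 1) :
    g * st n = n * g ∨ g * st n = st n * g := by
  have hng : σ (n * g) = σ g := by rw [hhom, hn, one_mul]
  have hgg := mul_st_comm_of_normal hnormal hg
  have hngng := mul_st_comm_of_normal hnormal (hng ▸ hg)
  rw [hanti] at hngng
  have H := hnormal (single g 1 + single (n * g) 1)
  simp only [oinvMap_add, oinvMap_single, hanti, hng, mul_one, mul_add, add_mul,
    single_mul_single, one_mul] at H
  -- the terms `g g*` and `(n g) (n g)*` of the two sides cancel
  rw [hgg, hngng, ← sub_eq_zero] at H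
  simp only [mul_assoc] at H
  have hpair : single (g * (st g * st n)) (σ g) + single (n * (g * st g)) (σ g)
      = (single (st g * (n * g)) (σ g) + single (st g * (st n * g)) (σ g) : MonoidAlgebra F G) := by
    rw [← sub_eq_zero, ← H]; abel
  rcases eq_or_eq_of_single_add_single_eq h2 hg hpair with h | h <;>
    [left; right] <;>
    · rw [← mul_assoc, hgg, mul_assoc] at h
      exact mul_left_cancel h

end OrientedInvolution

section Commutators

variable {G : Type*} [Group G]

lemma inv_mul_inv_mul_mul_eq_iff {a b c : G} : a⁻¹ * b⁻¹ * a * b = c ↔ a * b = b * a * c := by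
  rw [show a⁻¹ * b⁻¹ * a * b = (b * a)⁻¹ * (a * b) by group, inv_mul_eq_iff_eq_mul]

lemma inv_mul_inv_mul_mul_eq_one_iff {a b : G} : a⁻¹ * b⁻¹ * a * b = 1 ↔ a * b = b * a := by
  rw [inv_mul_inv_mul_mul_eq_iff, mul_one]

lemma eq_one_of_inv_mul_inv_mul_mul_eq_right {a b : G} (h : a⁻¹ * b⁻¹ * a * b = b) : b = 1 := by
  rw [inv_mul_inv_mul_mul_eq_iff] at h
  exact right_eq_mul.1 (mul_right_cancel h : a = b * a)

lemma inv_mul_inv_mul_mul_eq_one_or_of_mul_eq_or {s g n m : G} (hs : s ∈ Subgroup.center G)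
    (hs2 : s * s = 1) (hm : m = n ∨ m = s * n) (h : g * m = n * g ∨ g * m = m * g) :
    g⁻¹ * n⁻¹ * g * n = 1 ∨ g⁻¹ * n⁻¹ * g * n = s := by
  simp only [inv_mul_inv_mul_mul_eq_iff, mul_one]
  rcases hm with rfl | rfl
  · exact .inl (h.elim id id)
  · have hgs : g * (s * n) = s * (g * n) := by
      rw [← mul_assoc, Subgroup.mem_center_iff.1 hs g, mul_assoc]
    rw [hgs, mul_assoc] at h
    rcases h with h | h
    · right
      calc g * n = s * (s * (g * n)) := by rw [← mul_assoc, hs2, one_mul]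
        _ = n * g * s := by rw [h, Subgroup.mem_center_iff.1 hs]
    · exact .inl (mul_left_cancel h)

lemma inv_mul_inv_mul_mul_eq_one_or_of_ker_right {F : Type*} [Ring F] {σ : G → F} {s : G}
    (hhom : ∀ g h : G, σ (g * h) = σ g * σ h) (hval : ∀ g : G, σ g = 1 ∨ σ g = -1)
    (hs2 : s * s = 1)
    (hker : ∀ g n : G, σ n = 1 → g⁻¹ * n⁻¹ * g * n = 1 ∨ g⁻¹ * n⁻¹ * g * n = s) (g h : G) :
    g⁻¹ * h⁻¹ * g * h = 1 ∨ g⁻¹ * h⁻¹ * g * h = s := by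
  rcases hval h with hh | hh
  · exact hker g h hh
  rcases hval g with hg | hg
  · rw [show g⁻¹ * h⁻¹ * g * h = (h⁻¹ * g⁻¹ * h * g)⁻¹ by group, inv_eq_one,
      inv_eq_iff_eq_inv, inv_eq_of_mul_eq_one_right hs2]
    exact hker h g hg
  · have hgh : σ (g⁻¹ * h) = 1 := by
      have e := hhom g (g⁻¹ * h)
      rw [mul_inv_cancel_left, hh, hg, neg_one_mul, neg_inj] at e
      exact e.symm
    rw [show g⁻¹ * h⁻¹ * g * h = g⁻¹ * (g⁻¹ * h)⁻¹ * g * (g⁻¹ * h) by group]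
    exact hker g _ hgh

end Commutators

theorem stmt_16_general {F G : Type*} [Field F] [Group G] (h2 : (2 : F) ≠ 0)
    (st : G → G) (hanti : ∀ g h : G, st (g * h) = st h * st g)
    (σ : G → F) (hhom : ∀ g h : G, σ (g * h) = σ g * σ h)
    (hval : ∀ g : G, σ g = 1 ∨ σ g = -1)
    (hnormal : ∀ α : MonoidAlgebra F G, α * oinvMap st σ α = oinvMap st σ α * α)
    (s : G) (hsN : σ s = 1) (hs1 : s ≠ 1) (hs2 : s * s = 1)
    (hNcomm : ∀ m n : G, σ m = 1 → σ n = 1 →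
      (m⁻¹ * n⁻¹ * m * n = 1 ∨ m⁻¹ * n⁻¹ * m * n = s))
    (hNcommS : ∃ m n : G, σ m = 1 ∧ σ n = 1 ∧ m⁻¹ * n⁻¹ * m * n = s)
    (hcanon : ∀ n : G, σ n = 1 →
      ((∀ k : G, σ k = 1 → n * k = k * n) → st n = n) ∧
      ((¬ ∀ k : G, σ k = 1 → n * k = k * n) → st n = s * n)) :
    (∀ g h : G, g⁻¹ * h⁻¹ * g * h = 1 ∨ g⁻¹ * h⁻¹ * g * h = s) ∧
      (∃ g h : G, g⁻¹ * h⁻¹ * g * h = s) ∧ s ∈ Subgroup.center G := by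
  have hσ : ∀ g, σ g ≠ 0 := fun g => by rcases hval g with h | h <;> simp [h]
  have hD : ∀ g n, σ n = 1 → g * st n = n * g ∨ g * st n = st n * g :=
    fun g n hn => mul_st_eq_or_of_normal h2 hanti hhom hnormal (hσ g) hn
  have hst : ∀ n, σ n = 1 → st n = n ∨ st n = s * n := fun n hn => by
    by_cases hc : ∀ k, σ k = 1 → n * k = k * n
    exacts [.inl ((hcanon n hn).1 hc), .inr ((hcanon n hn).2 hc)]
  have hsst : st s = s := (hcanon s hsN).1 fun k hk =>
    (inv_mul_inv_mul_mul_eq_one_iff.1 ((hNcomm k s hk hsN).resolve_right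
      fun h => hs1 (eq_one_of_inv_mul_inv_mul_mul_eq_right h))).symm
  have hs : s ∈ Subgroup.center G :=
    Subgroup.mem_center_iff.2 fun g => by simpa [hsst] using hD g s hsN
  refine ⟨inv_mul_inv_mul_mul_eq_one_or_of_ker_right hhom hval hs2 fun g n hn =>
    inv_mul_inv_mul_mul_eq_one_or_of_mul_eq_or hs hs2 (hst n hn) (hD g n hn), ?_, hs⟩
  obtain ⟨m, n, -, -, h⟩ := hNcommS
  exact ⟨m, n, h⟩

theorem stmt_16 {F G : Type*} [Field F] [Group G] (h2 : (2 : F) ≠ 0)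
    (hna : ∃ g h : G, g * h ≠ h * g)
    (st : G → G) (hanti : ∀ g h : G, st (g * h) = st h * st g)
    (hinvol : ∀ g : G, st (st g) = g)
    (σ : G → F) (hhom : ∀ g h : G, σ (g * h) = σ g * σ h)
    (hval : ∀ g : G, σ g = 1 ∨ σ g = -1)
    (hnt : ∃ g : G, σ g = -1)
    (hker : ∀ g : G, σ (g * st g) = 1)
    (hnormal : ∀ α : MonoidAlgebra F G, α * oinvMap st σ α = oinvMap st σ α * α)
    (s : G) (hsN : σ s = 1) (hs1 : s ≠ 1) (hs2 : s * s = 1)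
    (hNna : ∃ m n : G, σ m = 1 ∧ σ n = 1 ∧ m * n ≠ n * m)
    (hNLC : ∀ m n : G, σ m = 1 → σ n = 1 → (m * n = n * m ↔
      ((∀ k : G, σ k = 1 → m * k = k * m) ∨ (∀ k : G, σ k = 1 → n * k = k * n) ∨
        (∀ k : G, σ k = 1 → (m * n) * k = k * (m * n)))))
    (hNcomm : ∀ m n : G, σ m = 1 → σ n = 1 →
      (m⁻¹ * n⁻¹ * m * n = 1 ∨ m⁻¹ * n⁻¹ * m * n = s))
    (hNcommS : ∃ m n : G, σ m = 1 ∧ σ n = 1 ∧ m⁻¹ * n⁻¹ * m * n = s)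
    (hcanon : ∀ n : G, σ n = 1 →
      ((∀ k : G, σ k = 1 → n * k = k * n) → st n = n) ∧
      ((¬ ∀ k : G, σ k = 1 → n * k = k * n) → st n = s * n)) :
    (∀ g h : G, g⁻¹ * h⁻¹ * g * h = 1 ∨ g⁻¹ * h⁻¹ * g * h = s) ∧
      (∃ g h : G, g⁻¹ * h⁻¹ * g * h = s) ∧ s ∈ Subgroup.center G :=
  stmt_16_general h2 st hanti σ hhom hval hnormal s hsN hs1 hs2 hNcomm hNcommS hcanon
end
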